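/- arXiv:1612.05756 — 4 statements merged into one kernel-verified Lean document; each statement's English description precedes it below -/
import Mathlib

section
/- Let U be a type and 𝒟 a family of subsets of U. The set ℛ_f of ⊆-minimal elements of the family ℛ of nonempty relevant sets is exactly the set of cells: ℛ_f = { cell(u) : u ∈ U }. In particular, every cell cell(u) is a nonempty element of ℛ that is ⊆-minimal in ℛ, and every ⊆-minimal element of ℛ equals cell(u) for each of its points u. -/
open Set

/-- The family of nonempty relevant sets for a family `𝒟` of subsets of `U`. -/
def relevant {U : Type*} (𝒟 : Set (Set U)) : Set (Set U) :=
  {Z | ∃ 𝒟₁ ⊆ 𝒟, ∃ 𝒟₂ ⊆ 𝒟, Z = ⋂₀ 𝒟₁ \ ⋃₀ 𝒟₂ ∧ Z.Nonempty}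

/-- The `⊆`-minimal elements of the family of nonempty relevant sets. -/
def relevantMin {U : Type*} (𝒟 : Set (Set U)) : Set (Set U) :=
  {X ∈ relevant 𝒟 | ∀ Y ∈ relevant 𝒟, Y ⊆ X → Y = X}

/-- The cell of a point `u`. -/
def cell {U : Type*} (𝒟 : Set (Set U)) (u : U) : Set U :=
  ⋂₀ {A ∈ 𝒟 | u ∈ A} \ ⋃₀ {A ∈ 𝒟 | u ∉ A}

lemma mem_cell_self {U : Type*} (𝒟 : Set (Set U)) (u : U) : u ∈ cell 𝒟 u := by
  constructor
  · intro A hA; exact hA.2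
  · rintro ⟨A, hA, hu⟩; exact hA.2 hu

/-- Any relevant set containing `u` contains the cell of `u`. -/
lemma cell_subset {U : Type*} (𝒟 : Set (Set U)) (u : U) {Z : Set U}
    (hZ : Z ∈ relevant 𝒟) (hu : u ∈ Z) : cell 𝒟 u ⊆ Z := by
  obtain ⟨D₁, h₁, D₂, h₂, rfl, -⟩ := hZ
  intro w hw
  constructor
  · intro A hA
    exact hw.1 A ⟨h₁ hA, hu.1 A hA⟩
  · rintro ⟨A, hA, hwA⟩
    exact hw.2 ⟨A, ⟨h₂ hA, fun huA => hu.2 ⟨A, hA, huA⟩⟩, hwA⟩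

lemma cell_mem_relevant {U : Type*} (𝒟 : Set (Set U)) (u : U) :
    cell 𝒟 u ∈ relevant 𝒟 := by
  exact ⟨{A ∈ 𝒟 | u ∈ A}, fun A hA => hA.1, {A ∈ 𝒟 | u ∉ A}, fun A hA => hA.1,
    rfl, ⟨u, mem_cell_self 𝒟 u⟩⟩

/-- Points of the same cell have the same cell. -/
lemma cell_eq_of_mem {U : Type*} (𝒟 : Set (Set U)) {u v : U}
    (hv : v ∈ cell 𝒟 u) : cell 𝒟 v = cell 𝒟 u := by
  have h1 : ∀ A ∈ 𝒟, u ∈ A → v ∈ A := fun A hA huA => hv.1 A ⟨hA, huA⟩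
  have h2 : ∀ A ∈ 𝒟, u ∉ A → v ∉ A := fun A hA huA hvA => hv.2 ⟨A, ⟨hA, huA⟩, hvA⟩
  have key : {A ∈ 𝒟 | v ∈ A} = {A ∈ 𝒟 | u ∈ A} := by
    ext A
    constructor
    · rintro ⟨hA, hvA⟩
      refine ⟨hA, by_contra fun h => h2 A hA h hvA⟩
    · rintro ⟨hA, huA⟩
      exact ⟨hA, h1 A hA huA⟩
  have key2 : {A ∈ 𝒟 | v ∉ A} = {A ∈ 𝒟 | u ∉ A} := by
    ext A
    constructor
    · rintro ⟨hA, hvA⟩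
      refine ⟨hA, fun h => hvA (h1 A hA h)⟩
    · rintro ⟨hA, huA⟩
      exact ⟨hA, h2 A hA huA⟩
  unfold cell
  rw [key, key2]

lemma cell_mem_relevantMin {U : Type*} (𝒟 : Set (Set U)) (u : U) :
    cell 𝒟 u ∈ relevantMin 𝒟 := by
  refine ⟨cell_mem_relevant 𝒟 u, fun Y hY hYsub => ?_⟩
  obtain ⟨D₁, hs₁, D₂, hs₂, hYeq, v, hv⟩ := hY
  have hY : Y ∈ relevant 𝒟 := ⟨D₁, hs₁, D₂, hs₂, hYeq, v, hv⟩
  have hvu : v ∈ cell 𝒟 u := hYsub hv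
  have : cell 𝒟 v ⊆ Y := cell_subset 𝒟 v hY hv
  rw [cell_eq_of_mem 𝒟 hvu] at this
  exact subset_antisymm hYsub this

theorem relevantMin_eq_cells {U : Type*} (𝒟 : Set (Set U)) :
    relevantMin 𝒟 = {C | ∃ u : U, C = cell 𝒟 u} ∧
    (∀ u : U, (cell 𝒟 u).Nonempty ∧ cell 𝒟 u ∈ relevant 𝒟 ∧
      cell 𝒟 u ∈ relevantMin 𝒟) ∧
    (∀ X ∈ relevantMin 𝒟, ∀ u ∈ X, X = cell 𝒟 u) := by
  have hmin : ∀ X ∈ relevantMin 𝒟, ∀ u ∈ X, X = cell 𝒟 u := by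
    intro X hX u hu
    exact (hX.2 (cell 𝒟 u) (cell_mem_relevant 𝒟 u) (cell_subset 𝒟 u hX.1 hu)).symm
  refine ⟨?_, fun u => ⟨⟨u, mem_cell_self 𝒟 u⟩, cell_mem_relevant 𝒟 u,
    cell_mem_relevantMin 𝒟 u⟩, hmin⟩
  ext X
  constructor
  · intro hX
    obtain ⟨hXr, hXm⟩ := hX
    obtain ⟨D₁, hs₁, D₂, hs₂, hXeq, u, hu⟩ := hXr
    have hX : X ∈ relevantMin 𝒟 := ⟨⟨D₁, hs₁, D₂, hs₂, hXeq, _, hu⟩, hXm⟩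
    exact ⟨u, hmin X hX u hu⟩
  · rintro ⟨u, rfl⟩
    exact cell_mem_relevantMin 𝒟 u
end

section
/- Let U be a type and 𝒟 a family of subsets of U. The elements of ℛ_f, the set of ⊆-minimal elements of the family ℛ of nonempty relevant sets, are pairwise disjoint: if X, Y ∈ ℛ_f and X ≠ Y, then X ∩ Y = ∅. -/
open Set

theorem relevantMin_pairwise_disjoint {U : Type*} (𝒟 : Set (Set U))
    (X Y : Set U) (hX : X ∈ relevantMin 𝒟) (hY : Y ∈ relevantMin 𝒟)
    (hXY : X ≠ Y) : X ∩ Y = ∅ := by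
  by_contra h
  obtain ⟨hXr, hXmin⟩ := hX
  obtain ⟨hYr, hYmin⟩ := hY
  obtain ⟨A₁, hA₁, A₂, hA₂, hXeq, -⟩ := hXr
  obtain ⟨B₁, hB₁, B₂, hB₂, hYeq, -⟩ := hYr
  have hne : (X ∩ Y).Nonempty := nonempty_iff_ne_empty.mpr h
  have heq : X ∩ Y = ⋂₀ (A₁ ∪ B₁) \ ⋃₀ (A₂ ∪ B₂) := by
    rw [hXeq, hYeq, sInter_union, sUnion_union]
    ext x
    simp only [mem_inter_iff, mem_diff, mem_union]
    tauto
  have hrel : X ∩ Y ∈ relevant 𝒟 :=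
    ⟨A₁ ∪ B₁, union_subset hA₁ hB₁, A₂ ∪ B₂, union_subset hA₂ hB₂, heq, hne⟩
  have h1 := hXmin _ hrel inter_subset_left
  have h2 := hYmin _ hrel inter_subset_right
  exact hXY (h1 ▸ h2)
end

section
/- Let U be a type and 𝒟 a family of subsets of U. For every X ∈ ℛ_f (a ⊆-minimal nonempty relevant set), every u ∈ X, and every A ∈ 𝒟: u ∈ A if and only if X ⊆ A. That is, all elements of a minimal relevant set X belong to exactly those members of 𝒟 that contain X, and to no others. -/
open Set

theorem mem_iff_subset_of_relevantMin {U : Type*} (𝒟 : Set (Set U))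
    (X : Set U) (hX : X ∈ relevantMin 𝒟) (u : U) (hu : u ∈ X)
    (A : Set U) (hA : A ∈ 𝒟) : u ∈ A ↔ X ⊆ A := by
  constructor
  · intro huA
    obtain ⟨⟨𝒟₁, h1, 𝒟₂, h2, hXeq, _⟩, hmin⟩ := hX
    set Y : Set U := ⋂₀ (insert A 𝒟₁) \ ⋃₀ 𝒟₂ with hYdef
    have hYX : Y = X ∩ A := by
      rw [hXeq, hYdef, sInter_insert]
      ext x
      simp only [mem_diff, mem_inter_iff, mem_sInter]
      tauto
    have hYrel : Y ∈ relevant 𝒟 := by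
      refine ⟨insert A 𝒟₁, insert_subset hA h1, 𝒟₂, h2, rfl, ?_⟩
      rw [hYX]; exact ⟨u, hu, huA⟩
    have hYsub : Y ⊆ X := by rw [hYX]; exact inter_subset_left
    have := hmin Y hYrel hYsub
    rw [hYX] at this
    intro x hx
    rw [← this] at hx
    exact hx.2
  · intro h; exact h hu
end

section
/- Let U be a type, let A, A', A'' be subsets of U with A'' ⊆ A', let 𝒟 = {A, A', A''}, and assume that each of the six sets U \ (A ∪ A'), A \ A', (A ∩ A') \ A'', A ∩ A'', A'' \ A, A' \ (A ∪ A'') is nonempty. Then ℛ_f, the set of ⊆-minimal elements of the family ℛ of nonempty relevant sets for 𝒟, is exactly { U \ (A ∪ A'), A \ A', (A ∩ A') \ A'', A ∩ A'', A'' \ A, A' \ (A ∪ A'') }. -/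
open Set

section Aux

variable {U : Type*} (A A' A'' : Set U)

/-- Two points have the same pattern of membership. -/
def samePat (x y : U) : Prop :=
  (x ∈ A ↔ y ∈ A) ∧ (x ∈ A' ↔ y ∈ A') ∧ (x ∈ A'' ↔ y ∈ A'')

variable {A A' A''}

lemma mem_of_samePat {Z : Set U} (hZ : Z ∈ relevant {A, A', A''})
    {x y : U} (hxy : samePat A A' A'' x y) (hx : x ∈ Z) : y ∈ Z := by
  obtain ⟨𝒟₁, h1, 𝒟₂, h2, rfl, -⟩ := hZ
  obtain ⟨hxI, hxU⟩ := hx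
  constructor
  · intro S hS
    have hS3 := h1 hS
    simp only [mem_insert_iff, mem_singleton_iff] at hS3
    rcases hS3 with rfl | rfl | rfl
    exacts [hxy.1.mp (hxI _ hS), hxy.2.1.mp (hxI _ hS), hxy.2.2.mp (hxI _ hS)]
  · intro hyU
    obtain ⟨S, hS, hyS⟩ := hyU
    apply hxU
    have hS3 := h2 hS
    simp only [mem_insert_iff, mem_singleton_iff] at hS3
    rcases hS3 with rfl | rfl | rfl
    exacts [⟨_, hS, hxy.1.mpr hyS⟩, ⟨_, hS, hxy.2.1.mpr hyS⟩, ⟨_, hS, hxy.2.2.mpr hyS⟩]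

lemma samePat_of_mem_atom (h : A'' ⊆ A') {T : Set U}
    (hT : T ∈ ({univ \ (A ∪ A'), A \ A', (A ∩ A') \ A'', A ∩ A'', A'' \ A,
      A' \ (A ∪ A'')} : Set (Set U)))
    {x y : U} (hx : x ∈ T) (hy : y ∈ T) : samePat A A' A'' x y := by
  have hx' := @h x
  have hy' := @h y
  simp only [mem_insert_iff, mem_singleton_iff] at hT
  rcases hT with rfl | rfl | rfl | rfl | rfl | rfl <;>
    simp only [samePat, mem_diff, mem_union, mem_inter_iff, mem_univ, true_and,
      not_or] at hx hy ⊢ <;> tauto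

lemma exists_atom (h : A'' ⊆ A') (x : U) :
    ∃ T ∈ ({univ \ (A ∪ A'), A \ A', (A ∩ A') \ A'', A ∩ A'', A'' \ A,
      A' \ (A ∪ A'')} : Set (Set U)), x ∈ T := by
  by_cases hA : x ∈ A <;> by_cases hA' : x ∈ A' <;> by_cases hA'' : x ∈ A''
  · exact ⟨A ∩ A'', by simp, hA, hA''⟩
  · exact ⟨(A ∩ A') \ A'', by simp, ⟨hA, hA'⟩, hA''⟩
  · exact absurd (h hA'') hA'
  · exact ⟨A \ A', by simp, hA, hA'⟩
  · exact ⟨A'' \ A, by simp, hA'', hA⟩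
  · exact ⟨A' \ (A ∪ A''), by simp, hA', by simp [hA, hA'']⟩
  · exact absurd (h hA'') hA'
  · exact ⟨univ \ (A ∪ A'), by simp, mem_univ x, by simp [hA, hA']⟩

lemma pair_subset3 : ({A, A'} : Set (Set U)) ⊆ {A, A', A''} := by
  intro S hS
  simp only [mem_insert_iff, mem_singleton_iff] at hS ⊢
  tauto

lemma atom_relevant (h000 : (univ \ (A ∪ A')).Nonempty)
    (h100 : (A \ A').Nonempty)
    (h110 : ((A ∩ A') \ A'').Nonempty)
    (h111 : (A ∩ A'').Nonempty)
    (h011 : (A'' \ A).Nonempty)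
    (h010 : (A' \ (A ∪ A'')).Nonempty) {T : Set U}
    (hT : T ∈ ({univ \ (A ∪ A'), A \ A', (A ∩ A') \ A'', A ∩ A'', A'' \ A,
      A' \ (A ∪ A'')} : Set (Set U))) : T ∈ relevant {A, A', A''} := by
  have sub1 : ({A} : Set (Set U)) ⊆ {A, A', A''} := by
    simp [singleton_subset_iff]
  have sub2 : ({A'} : Set (Set U)) ⊆ {A, A', A''} := by
    simp [singleton_subset_iff]
  have sub3 : ({A''} : Set (Set U)) ⊆ {A, A', A''} := by
    simp [singleton_subset_iff]
  have sub12 : ({A, A'} : Set (Set U)) ⊆ {A, A', A''} := by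
    intro S hS; simp only [mem_insert_iff, mem_singleton_iff] at hS ⊢; tauto
  have sub13 : ({A, A''} : Set (Set U)) ⊆ {A, A', A''} := by
    intro S hS; simp only [mem_insert_iff, mem_singleton_iff] at hS ⊢; tauto
  simp only [mem_insert_iff, mem_singleton_iff] at hT
  rcases hT with rfl | rfl | rfl | rfl | rfl | rfl
  · exact ⟨∅, empty_subset _, {A, A'}, sub12,
      by rw [sInter_empty, sUnion_pair], h000⟩
  · exact ⟨{A}, sub1, {A'}, sub2,
      by rw [sInter_singleton, sUnion_singleton], h100⟩
  · exact ⟨{A, A'}, sub12, {A''}, sub3,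
      by rw [sInter_pair, sUnion_singleton], h110⟩
  · exact ⟨{A, A''}, sub13, ∅, empty_subset _,
      by rw [sInter_pair, sUnion_empty, diff_empty], h111⟩
  · exact ⟨{A''}, sub3, {A}, sub1,
      by rw [sInter_singleton, sUnion_singleton], h011⟩
  · exact ⟨{A'}, sub2, {A, A''}, sub13,
      by rw [sInter_singleton, sUnion_pair], h010⟩

end Aux

theorem relevantMin_of_example {U : Type*} (A A' A'' : Set U) (h : A'' ⊆ A')
    (h000 : (univ \ (A ∪ A')).Nonempty)
    (h100 : (A \ A').Nonempty)
    (h110 : ((A ∩ A') \ A'').Nonempty)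
    (h111 : (A ∩ A'').Nonempty)
    (h011 : (A'' \ A).Nonempty)
    (h010 : (A' \ (A ∪ A'')).Nonempty) :
    relevantMin {A, A', A''} =
      {univ \ (A ∪ A'), A \ A', (A ∩ A') \ A'', A ∩ A'', A'' \ A,
        A' \ (A ∪ A'')} := by
  apply Set.Subset.antisymm
  · rintro X ⟨hXrel, hXmin⟩
    obtain ⟨𝒟₁, -, 𝒟₂, -, -, hne⟩ := id hXrel
    obtain ⟨x, hx⟩ := hne
    obtain ⟨T, hT6, hxT⟩ := exists_atom h x
    have hTrel := atom_relevant h000 h100 h110 h111 h011 h010 hT6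
    have hTX : T ⊆ X := fun t ht =>
      mem_of_samePat hXrel (samePat_of_mem_atom h hT6 hxT ht) hx
    have hTX' := hXmin T hTrel hTX
    rwa [← hTX']
  · intro T hT6
    refine ⟨atom_relevant h000 h100 h110 h111 h011 h010 hT6, ?_⟩
    intro Y hYrel hYT
    obtain ⟨𝒟₁, -, 𝒟₂, -, -, hne⟩ := id hYrel
    obtain ⟨y, hy⟩ := hne
    refine hYT.antisymm fun t ht => ?_
    exact mem_of_samePat hYrel (samePat_of_mem_atom h hT6 (hYT hy) ht) hy
end
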